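/- arXiv:2210.10336 — 6 statements merged into one kernel-verified Lean document; each statement's English description precedes it below -/
import Mathlib

section
/- Let E be a finite-dimensional real normed vector space, F : E → E a map, x* ∈ E with F(x*) = 0, and r, ξ, L > 0. Assume that at every point x of the closed ball B̄(x*, r), F has a Fréchet derivative DF(x), that each DF(x) is invertible with ‖DF(x)⁻¹‖ ≤ ξ in operator norm, and that DF is Lipschitz continuous in operator norm with constant L on B̄(x*, r). Then for every x in B̄(x*, r), the single Newton step satisfies ‖x − DF(x)⁻¹ F(x) − x*‖ ≤ ξ·L·‖x − x*‖². -/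
open Metric

/-- One-step Newton estimate: the distance to the root after a single Newton
step is bounded quadratically in the current distance to the root. -/
theorem newton_one_step_quadratic_estimate
    {E : Type*} [NormedAddCommGroup E] [NormedSpace ℝ E] [FiniteDimensional ℝ E]
    (F : E → E) (xstar : E) (hFroot : F xstar = 0)
    (r ξ L : ℝ) (hr : 0 < r) (hξ : 0 < ξ) (hL : 0 < L)
    (DF : E → (E ≃L[ℝ] E))
    (hderiv : ∀ x ∈ closedBall xstar r, HasFDerivAt F (DF x : E →L[ℝ] E) x)
    (hinv : ∀ x ∈ closedBall xstar r, ‖((DF x).symm : E →L[ℝ] E)‖ ≤ ξ)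
    (hlip : ∀ x ∈ closedBall xstar r, ∀ y ∈ closedBall xstar r,
      ‖(DF x : E →L[ℝ] E) - (DF y : E →L[ℝ] E)‖ ≤ L * ‖x - y‖) :
    ∀ x ∈ closedBall xstar r,
      ‖x - (DF x).symm (F x) - xstar‖ ≤ ξ * L * ‖x - xstar‖ ^ 2 := by
  intro x hx
  have hball : xstar ∈ closedBall xstar r := mem_closedBall_self hr.le
  set s : Set E := segment ℝ xstar x with hs
  have hsub : s ⊆ closedBall xstar r :=
    (convex_closedBall xstar r).segment_subset hball hx
  -- key Taylor estimate
  have hseg : ∀ y ∈ s, ‖y - x‖ ≤ ‖x - xstar‖ := by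
    intro y hy
    rcases hy with ⟨a, b, ha, hb, hab, rfl⟩
    have : a • xstar + b • x - x = a • (xstar - x) := by
      have hb' : b = 1 - a := by linarith
      subst hb'
      module
    rw [this, norm_smul, Real.norm_eq_abs, abs_of_nonneg ha, ← norm_neg, neg_sub]
    nlinarith [norm_nonneg (x - xstar)]
  have hTaylor : ‖F x - F xstar - (DF x : E →L[ℝ] E) (x - xstar)‖
      ≤ (L * ‖x - xstar‖) * ‖x - xstar‖ := by
    apply Convex.norm_image_sub_le_of_norm_hasFDerivWithin_le'
      (f' := fun y => (DF y : E →L[ℝ] E)) (φ := (DF x : E →L[ℝ] E))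
      (fun y hy => ((hderiv y (hsub hy)).hasFDerivWithinAt))
      (fun y hy => le_trans (hlip y (hsub hy) x hx) ?_)
      (convex_segment _ _) (left_mem_segment _ _ _) (right_mem_segment _ _ _)
    exact mul_le_mul_of_nonneg_left (hseg y hy) hL.le
  have hv : x - (DF x).symm (F x) - xstar
      = (DF x).symm ((DF x : E →L[ℝ] E) (x - xstar) - F x) := by
    have h1 : (DF x).symm ((DF x : E →L[ℝ] E) (x - xstar)) = x - xstar :=
      (DF x).symm_apply_apply _
    rw [map_sub, h1]
    abel
  rw [hv]
  have hb1 : ‖(DF x).symm ((DF x : E →L[ℝ] E) (x - xstar) - F x)‖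
      ≤ ξ * ‖(DF x : E →L[ℝ] E) (x - xstar) - F x‖ := by
    calc ‖((DF x).symm : E →L[ℝ] E) ((DF x : E →L[ℝ] E) (x - xstar) - F x)‖
        ≤ ‖((DF x).symm : E →L[ℝ] E)‖ * ‖(DF x : E →L[ℝ] E) (x - xstar) - F x‖ :=
          ContinuousLinearMap.le_opNorm _ _
      _ ≤ ξ * ‖(DF x : E →L[ℝ] E) (x - xstar) - F x‖ :=
          mul_le_mul_of_nonneg_right (hinv x hx) (norm_nonneg _)
  have heq : ‖(DF x : E →L[ℝ] E) (x - xstar) - F x‖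
      = ‖F x - F xstar - (DF x : E →L[ℝ] E) (x - xstar)‖ := by
    rw [hFroot, ← norm_neg]
    congr 1
    abel
  calc ‖(DF x).symm ((DF x : E →L[ℝ] E) (x - xstar) - F x)‖
      ≤ ξ * ‖(DF x : E →L[ℝ] E) (x - xstar) - F x‖ := hb1
    _ ≤ ξ * ((L * ‖x - xstar‖) * ‖x - xstar‖) := by
        rw [heq]; exact mul_le_mul_of_nonneg_left hTaylor hξ.le
    _ = ξ * L * ‖x - xstar‖ ^ 2 := by ring
end

section
/- Let m, p be natural numbers, a, b ∈ ℝᵐ, c, e ∈ ℝᵖ, ε ∈ ℝᵖ with |ε_j| = 1 for every j, and s₁, s₂, z₁, z₂ ∈ ℝ. Then Σ_{i=1}^{m} (ψ(a_i, b_i, z₁) − ψ(a_i, b_i, z₂))² + Σ_{j=1}^{p} (ψ(c_j, e_j + ε_j·s₁, z₁) − ψ(c_j, e_j + ε_j·s₂, z₂))² ≤ (m + p)·(z₁ − z₂)² + 4p·(s₁ − s₂)² + 4p·|s₁ − s₂|·|z₁ − z₂|. -/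
/-- The smooth Fischer–Burmeister function. -/
noncomputable def smoothFB (a b z : ℝ) : ℝ := Real.sqrt (a ^ 2 + b ^ 2 + z ^ 2) - a - b

lemma sqrt_lip (a b₁ b₂ z₁ z₂ : ℝ) :
    |Real.sqrt (a^2+b₁^2+z₁^2) - Real.sqrt (a^2+b₂^2+z₂^2)| ≤ |b₁-b₂| + |z₁-z₂| := by
  set s1 := Real.sqrt (a^2+b₁^2+z₁^2) with hs1
  set s2 := Real.sqrt (a^2+b₂^2+z₂^2) with hs2
  have h1 : s1^2 = a^2+b₁^2+z₁^2 := Real.sq_sqrt (by positivity)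
  have h2 : s2^2 = a^2+b₂^2+z₂^2 := Real.sq_sqrt (by positivity)
  have p1 : 0 ≤ s1 := Real.sqrt_nonneg _
  have p2 : 0 ≤ s2 := Real.sqrt_nonneg _
  have hb1 : |b₁| ≤ s1 := by
    rw [hs1, ← Real.sqrt_sq_eq_abs]; exact Real.sqrt_le_sqrt (by nlinarith [sq_nonneg a, sq_nonneg z₁])
  have hz1 : |z₁| ≤ s1 := by
    rw [hs1, ← Real.sqrt_sq_eq_abs]; exact Real.sqrt_le_sqrt (by nlinarith [sq_nonneg a, sq_nonneg b₁])
  have hb2 : |b₂| ≤ s2 := by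
    rw [hs2, ← Real.sqrt_sq_eq_abs]; exact Real.sqrt_le_sqrt (by nlinarith [sq_nonneg a, sq_nonneg z₂])
  have hz2 : |z₂| ≤ s2 := by
    rw [hs2, ← Real.sqrt_sq_eq_abs]; exact Real.sqrt_le_sqrt (by nlinarith [sq_nonneg a, sq_nonneg b₂])
  rw [abs_sub_le_iff]
  constructor
  · nlinarith [le_abs_self (b₁-b₂), neg_abs_le (b₁-b₂), le_abs_self (z₁-z₂), neg_abs_le (z₁-z₂),
      le_abs_self b₂, neg_abs_le b₂, le_abs_self z₂, neg_abs_le z₂,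
      abs_nonneg (b₁-b₂), abs_nonneg (z₁-z₂), mul_nonneg (abs_nonneg (b₁-b₂)) (abs_nonneg (z₁-z₂))]
  · nlinarith [le_abs_self (b₁-b₂), neg_abs_le (b₁-b₂), le_abs_self (z₁-z₂), neg_abs_le (z₁-z₂),
      le_abs_self b₁, neg_abs_le b₁, le_abs_self z₁, neg_abs_le z₁,
      abs_nonneg (b₁-b₂), abs_nonneg (z₁-z₂), mul_nonneg (abs_nonneg (b₁-b₂)) (abs_nonneg (z₁-z₂))]

lemma fb_lip (a b₁ b₂ z₁ z₂ : ℝ) :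
    |smoothFB a b₁ z₁ - smoothFB a b₂ z₂| ≤ 2 * |b₁ - b₂| + |z₁ - z₂| := by
  have h := sqrt_lip a b₁ b₂ z₁ z₂
  have hd : smoothFB a b₁ z₁ - smoothFB a b₂ z₂ =
      (Real.sqrt (a^2+b₁^2+z₁^2) - Real.sqrt (a^2+b₂^2+z₂^2)) - (b₁ - b₂) := by
    simp [smoothFB]; ring
  rw [hd]
  calc |_ - (b₁ - b₂)| ≤ |Real.sqrt (a^2+b₁^2+z₁^2) - Real.sqrt (a^2+b₂^2+z₂^2)| + |b₁-b₂| :=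
        abs_sub _ _
    _ ≤ 2 * |b₁ - b₂| + |z₁ - z₂| := by linarith

lemma fb_sq (a b₁ b₂ z₁ z₂ : ℝ) :
    (smoothFB a b₁ z₁ - smoothFB a b₂ z₂)^2 ≤
      4 * (b₁ - b₂)^2 + 4 * |b₁ - b₂| * |z₁ - z₂| + (z₁ - z₂)^2 := by
  have h := fb_lip a b₁ b₂ z₁ z₂
  have h0 : 0 ≤ |smoothFB a b₁ z₁ - smoothFB a b₂ z₂| := abs_nonneg _
  have hsq : (smoothFB a b₁ z₁ - smoothFB a b₂ z₂)^2 ≤ (2 * |b₁ - b₂| + |z₁ - z₂|)^2 := by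
    rw [← sq_abs]; exact pow_le_pow_left₀ h0 h 2
  calc (smoothFB a b₁ z₁ - smoothFB a b₂ z₂)^2 ≤ (2 * |b₁ - b₂| + |z₁ - z₂|)^2 := hsq
    _ = 4 * |b₁-b₂|^2 + 4 * |b₁ - b₂| * |z₁ - z₂| + |z₁-z₂|^2 := by ring
    _ = 4 * (b₁ - b₂)^2 + 4 * |b₁ - b₂| * |z₁ - z₂| + (z₁ - z₂)^2 := by rw [sq_abs, sq_abs]

/-- Error bound for the perturbed KKT residual (abstract form of the paper's
Theorem 2). -/
theorem perturbed_KKT_residual_bound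
    (m p : ℕ) (a b : Fin m → ℝ) (c e : Fin p → ℝ) (ε : Fin p → ℝ)
    (hε : ∀ j, |ε j| = 1) (s₁ s₂ z₁ z₂ : ℝ) :
    (∑ i, (smoothFB (a i) (b i) z₁ - smoothFB (a i) (b i) z₂) ^ 2) +
      (∑ j, (smoothFB (c j) (e j + ε j * s₁) z₁ -
              smoothFB (c j) (e j + ε j * s₂) z₂) ^ 2) ≤
    ((m : ℝ) + (p : ℝ)) * (z₁ - z₂) ^ 2 + 4 * (p : ℝ) * (s₁ - s₂) ^ 2 +
      4 * (p : ℝ) * |s₁ - s₂| * |z₁ - z₂| := by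
  have H1 : (∑ i, (smoothFB (a i) (b i) z₁ - smoothFB (a i) (b i) z₂) ^ 2) ≤
      (m : ℝ) * (z₁ - z₂)^2 := by
    calc (∑ i, (smoothFB (a i) (b i) z₁ - smoothFB (a i) (b i) z₂) ^ 2)
        ≤ ∑ _i : Fin m, (z₁ - z₂)^2 := by
          apply Finset.sum_le_sum
          intro i _
          have := fb_sq (a i) (b i) (b i) z₁ z₂
          simpa using this
      _ = (m : ℝ) * (z₁ - z₂)^2 := by
          rw [Finset.sum_const, Finset.card_univ, Fintype.card_fin, nsmul_eq_mul]
  have H2 : (∑ j, (smoothFB (c j) (e j + ε j * s₁) z₁ -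
              smoothFB (c j) (e j + ε j * s₂) z₂) ^ 2) ≤
      (p : ℝ) * (4 * (s₁ - s₂)^2 + 4 * |s₁ - s₂| * |z₁ - z₂| + (z₁ - z₂)^2) := by
    calc (∑ j, (smoothFB (c j) (e j + ε j * s₁) z₁ -
              smoothFB (c j) (e j + ε j * s₂) z₂) ^ 2)
        ≤ ∑ _j : Fin p, (4 * (s₁ - s₂)^2 + 4 * |s₁ - s₂| * |z₁ - z₂| + (z₁ - z₂)^2) := by
          apply Finset.sum_le_sum
          intro j _
          have h := fb_sq (c j) (e j + ε j * s₁) (e j + ε j * s₂) z₁ z₂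
          have hb : (e j + ε j * s₁) - (e j + ε j * s₂) = ε j * (s₁ - s₂) := by ring
          have habs : |(e j + ε j * s₁) - (e j + ε j * s₂)| = |s₁ - s₂| := by
            rw [hb, abs_mul, hε j, one_mul]
          have hsq2 : ((e j + ε j * s₁) - (e j + ε j * s₂))^2 = (s₁ - s₂)^2 := by
            rw [← sq_abs, habs, sq_abs]
          rw [habs, hsq2] at h
          exact h
      _ = (p : ℝ) * _ := by
          rw [Finset.sum_const, Finset.card_univ, Fintype.card_fin, nsmul_eq_mul]
  nlinarith [H1, H2]
end

section
/- Let n be a natural number, a, b, b' ∈ ℝⁿ, z₁, z₂ ∈ ℝ, and δ ≥ 0 with |b_i − b'_i| ≤ δ for every i. Then Σ_{i=1}^{n} (ψ(a_i, b_i, z₁) − ψ(a_i, b'_i, z₂))² ≤ n·(2δ + |z₁ − z₂|)². -/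
lemma sqrt_diff_bound (a b b' z₁ z₂ : ℝ) :
    |Real.sqrt (a ^ 2 + b ^ 2 + z₁ ^ 2) - Real.sqrt (a ^ 2 + b' ^ 2 + z₂ ^ 2)| ≤
      |b - b'| + |z₁ - z₂| := by
  set s := Real.sqrt (a ^ 2 + b ^ 2 + z₁ ^ 2) with hs
  set t := Real.sqrt (a ^ 2 + b' ^ 2 + z₂ ^ 2) with ht
  have hs0 : 0 ≤ s := Real.sqrt_nonneg _
  have ht0 : 0 ≤ t := Real.sqrt_nonneg _
  have hs2 : s ^ 2 = a ^ 2 + b ^ 2 + z₁ ^ 2 := Real.sq_sqrt (by positivity)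
  have ht2 : t ^ 2 = a ^ 2 + b' ^ 2 + z₂ ^ 2 := Real.sq_sqrt (by positivity)
  have key : (s - t) ^ 2 ≤ (b - b') ^ 2 + (z₁ - z₂) ^ 2 := by
    have hcs : a ^ 2 + b * b' + z₁ * z₂ ≤ s * t := by
      rcases le_or_gt (a ^ 2 + b * b' + z₁ * z₂) 0 with h | h
      · exact h.trans (mul_nonneg hs0 ht0)
      · have hsq : (a ^ 2 + b * b' + z₁ * z₂) ^ 2 ≤ (s * t) ^ 2 := by
          rw [mul_pow, hs2, ht2]
          nlinarith [sq_nonneg (b * z₂ - b' * z₁), sq_nonneg (a * b - a * b'),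
            sq_nonneg (a * z₁ - a * z₂)]
        nlinarith [mul_nonneg hs0 ht0]
    nlinarith
  have habs : |b - b'| + |z₁ - z₂| = Real.sqrt ((|b - b'| + |z₁ - z₂|) ^ 2) := by
    rw [Real.sqrt_sq (by positivity)]
  rw [abs_le]
  constructor <;> nlinarith [key, abs_nonneg (b - b'), abs_nonneg (z₁ - z₂),
    sq_abs (b - b'), sq_abs (z₁ - z₂), mul_nonneg (abs_nonneg (b - b')) (abs_nonneg (z₁ - z₂))]

lemma smoothFB_diff_bound (a b b' z₁ z₂ : ℝ) :
    |smoothFB a b z₁ - smoothFB a b' z₂| ≤ 2 * |b - b'| + |z₁ - z₂| := by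
  have h := sqrt_diff_bound a b b' z₁ z₂
  have h2 : |b' - b| = |b - b'| := abs_sub_comm _ _
  unfold smoothFB
  calc |Real.sqrt (a ^ 2 + b ^ 2 + z₁ ^ 2) - a - b - (Real.sqrt (a ^ 2 + b' ^ 2 + z₂ ^ 2) - a - b')|
      = |(Real.sqrt (a ^ 2 + b ^ 2 + z₁ ^ 2) - Real.sqrt (a ^ 2 + b' ^ 2 + z₂ ^ 2)) + (b' - b)| := by
        ring_nf
    _ ≤ |Real.sqrt (a ^ 2 + b ^ 2 + z₁ ^ 2) - Real.sqrt (a ^ 2 + b' ^ 2 + z₂ ^ 2)| + |b' - b| :=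
        abs_add_le _ _
    _ ≤ (|b - b'| + |z₁ - z₂|) + |b - b'| := by rw [h2]; linarith
    _ = 2 * |b - b'| + |z₁ - z₂| := by ring

/-- Vector form of inequality (49) in the proof of the paper's Theorem 2. -/
theorem smoothFB_sq_sum_perturbation_bound
    (n : ℕ) (a b b' : Fin n → ℝ) (z₁ z₂ : ℝ) (δ : ℝ) (hδ : 0 ≤ δ)
    (hb : ∀ i, |b i - b' i| ≤ δ) :
    ∑ i, (smoothFB (a i) (b i) z₁ - smoothFB (a i) (b' i) z₂) ^ 2 ≤
      (n : ℝ) * (2 * δ + |z₁ - z₂|) ^ 2 := by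
  have hterm : ∀ i, (smoothFB (a i) (b i) z₁ - smoothFB (a i) (b' i) z₂) ^ 2 ≤
      (2 * δ + |z₁ - z₂|) ^ 2 := by
    intro i
    have h1 := smoothFB_diff_bound (a i) (b i) (b' i) z₁ z₂
    have h2 : |smoothFB (a i) (b i) z₁ - smoothFB (a i) (b' i) z₂| ≤ 2 * δ + |z₁ - z₂| := by
      have := hb i; linarith
    calc (smoothFB (a i) (b i) z₁ - smoothFB (a i) (b' i) z₂) ^ 2
        = |smoothFB (a i) (b i) z₁ - smoothFB (a i) (b' i) z₂| ^ 2 := (sq_abs _).symm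
      _ ≤ (2 * δ + |z₁ - z₂|) ^ 2 := by
          apply pow_le_pow_left₀ (abs_nonneg _) h2
  calc ∑ i, (smoothFB (a i) (b i) z₁ - smoothFB (a i) (b' i) z₂) ^ 2
      ≤ ∑ _i : Fin n, (2 * δ + |z₁ - z₂|) ^ 2 := Finset.sum_le_sum fun i _ => hterm i
    _ = (n : ℝ) * (2 * δ + |z₁ - z₂|) ^ 2 := by
        simp [Finset.sum_const, mul_comm]
end

section
/- Let m, q, p, n be natural numbers, H ∈ ℝ^{n×n} a symmetric positive semidefinite matrix, D ∈ ℝ^{m×m} and E ∈ ℝ^{p×p} symmetric negative definite matrices, G ∈ ℝ^{m×n}, Φ ∈ ℝ^{p×n}, and A ∈ ℝ^{q×n} a matrix of full row rank (rank A = q). Assume that the only vector x ∈ ℝⁿ with Hx = 0, Gx = 0 and Φx = 0 is x = 0. Then the symmetric block matrix J = [[D, 0, 0, −G], [0, 0, 0, A], [0, 0, E, −Φ], [−Gᵀ, Aᵀ, −Φᵀ, H]] of size (m + q + p + n) × (m + q + p + n) is nonsingular. -/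
/-!
Write a kernel vector of `J` as `(a, b, c, x)`. The first three block rows say `D a = G x`,
`A x = 0` and `E c = Φ x`; pairing the last block row with `x` turns it into
`xᵀ H x = aᵀ D a + cᵀ E c`, whose left side is `≥ 0` and right side `≤ 0`. Hence all three
quadratic forms vanish: definiteness of `-D` and `-E` gives `a = c = 0`, semidefiniteness of `H`
gives `H x = 0`, so `G x = Φ x = 0` and `x = 0`. The last row then reduces to `Aᵀ b = 0`, and
`b = 0` because `A` has full row rank.
-/

open Matrix

namespace Matrix

variable {m n R : Type*}

theorem isUnit_of_mulVec_eq_zero [Fintype n] [DecidableEq n] [Field R] {M : Matrix n n R}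
    (h : ∀ v, M *ᵥ v = 0 → v = 0) : IsUnit M := by
  rw [← mulVec_injective_iff_isUnit, ← coe_mulVecLin, ← LinearMap.ker_eq_bot]
  exact ker_mulVecLin_eq_bot_iff.2 h

theorem linearIndependent_row_iff_rank_eq_card [Field R] [Fintype m] [Fintype n]
    {A : Matrix m n R} :
    LinearIndependent R A.row ↔ A.rank = Fintype.card m := by
  rw [linearIndependent_iff_card_eq_finrank_span, rank_eq_finrank_span_row, eq_comm, Set.finrank]

theorem PosDef.eq_zero_of_dotProduct_mulVec_eq_zero [Ring R] [PartialOrder R] [StarRing R]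
    [Fintype n] {M : Matrix n n R} (hM : M.PosDef) {x : n → R} (h : star x ⬝ᵥ M *ᵥ x = 0) :
    x = 0 := by
  by_contra hx
  exact (hM.dotProduct_mulVec_pos hx).ne' h

end Matrix

section KKT

variable {m q p n : Type*} [Fintype m] [Fintype q] [Fintype p] [Fintype n]

theorem dotProduct_mulVec_eq_of_kkt {R : Type*} [CommRing R] {H : Matrix n n R}
    {D : Matrix m m R} {E : Matrix p p R} {G : Matrix m n R} {Φ : Matrix p n R}
    {A : Matrix q n R} {a : m → R} {b : q → R} {c : p → R} {x : n → R}
    (hDa : D *ᵥ a = G *ᵥ x) (hAx : A *ᵥ x = 0) (hEc : E *ᵥ c = Φ *ᵥ x)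
    (hstat : Aᵀ *ᵥ b + H *ᵥ x = Gᵀ *ᵥ a + Φᵀ *ᵥ c) :
    x ⬝ᵥ H *ᵥ x = a ⬝ᵥ D *ᵥ a + c ⬝ᵥ E *ᵥ c := by
  calc x ⬝ᵥ H *ᵥ x = x ⬝ᵥ (Aᵀ *ᵥ b + H *ᵥ x) - x ⬝ᵥ Aᵀ *ᵥ b := by
        rw [dotProduct_add, add_sub_cancel_left]
    _ = G *ᵥ x ⬝ᵥ a + Φ *ᵥ x ⬝ᵥ c - A *ᵥ x ⬝ᵥ b := by
        rw [hstat, dotProduct_add]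
        simp only [dotProduct_mulVec x, vecMul_transpose]
    _ = a ⬝ᵥ D *ᵥ a + c ⬝ᵥ E *ᵥ c := by
        rw [← hDa, ← hEc, hAx, zero_dotProduct, sub_zero, dotProduct_comm (D *ᵥ a),
          dotProduct_comm (E *ᵥ c)]

theorem kkt_homogeneous_eq_zero {H : Matrix n n ℝ} (hH : H.PosSemidef)
    {D : Matrix m m ℝ} (hD : (-D).PosDef) {E : Matrix p p ℝ} (hE : (-E).PosDef)
    {G : Matrix m n ℝ} {Φ : Matrix p n ℝ} {A : Matrix q n ℝ} (hA : LinearIndependent ℝ A.row)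
    (hker : ∀ x, H *ᵥ x = 0 → G *ᵥ x = 0 → Φ *ᵥ x = 0 → x = 0)
    {a : m → ℝ} {b : q → ℝ} {c : p → ℝ} {x : n → ℝ}
    (hDa : D *ᵥ a = G *ᵥ x) (hAx : A *ᵥ x = 0) (hEc : E *ᵥ c = Φ *ᵥ x)
    (hstat : Aᵀ *ᵥ b + H *ᵥ x = Gᵀ *ᵥ a + Φᵀ *ᵥ c) :
    a = 0 ∧ b = 0 ∧ c = 0 ∧ x = 0 := by
  have henergy := dotProduct_mulVec_eq_of_kkt hDa hAx hEc hstat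
  have hxHx : 0 ≤ x ⬝ᵥ H *ᵥ x := by simpa using hH.dotProduct_mulVec_nonneg x
  have haDa : 0 ≤ a ⬝ᵥ (-D) *ᵥ a := by simpa using hD.posSemidef.dotProduct_mulVec_nonneg a
  have hcEc : 0 ≤ c ⬝ᵥ (-E) *ᵥ c := by simpa using hE.posSemidef.dotProduct_mulVec_nonneg c
  have hsum : a ⬝ᵥ (-D) *ᵥ a + c ⬝ᵥ (-E) *ᵥ c + x ⬝ᵥ H *ᵥ x = 0 := by
    simp only [neg_mulVec, dotProduct_neg]
    linarith
  have ha : a = 0 := hD.eq_zero_of_dotProduct_mulVec_eq_zero (by rw [star_trivial]; linarith)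
  have hc : c = 0 := hE.eq_zero_of_dotProduct_mulVec_eq_zero (by rw [star_trivial]; linarith)
  have hHx : H *ᵥ x = 0 := (hH.dotProduct_mulVec_zero_iff x).1 (by rw [star_trivial]; linarith)
  have hx : x = 0 := hker x hHx (by rw [← hDa, ha, mulVec_zero]) (by rw [← hEc, hc, mulVec_zero])
  have hb : b = 0 := by
    refine mulVec_injective_iff.2 (by rwa [col_transpose]) ?_
    simpa [ha, hc, hHx] using hstat
  exact ⟨ha, hb, hc, hx⟩

end KKT

/-- Nonsingularity of the main diagonal block `J` of the KKT matrix
(abstract form of the paper's Lemma 1). -/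
theorem kkt_diag_block_nonsingular
    (m q p n : ℕ)
    (H : Matrix (Fin n) (Fin n) ℝ) (hH : H.PosSemidef)
    (D : Matrix (Fin m) (Fin m) ℝ) (hD : (-D).PosDef)
    (E : Matrix (Fin p) (Fin p) ℝ) (hE : (-E).PosDef)
    (G : Matrix (Fin m) (Fin n) ℝ) (Φ : Matrix (Fin p) (Fin n) ℝ)
    (A : Matrix (Fin q) (Fin n) ℝ) (hA : A.rank = q)
    (hker : ∀ x : Fin n → ℝ,
      H.mulVec x = 0 → G.mulVec x = 0 → Φ.mulVec x = 0 → x = 0) :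
    IsUnit (Matrix.fromBlocks
      (Matrix.fromBlocks D 0 0 0) (Matrix.fromBlocks 0 (-G) 0 A)
      (Matrix.fromBlocks 0 0 (-Gᵀ) Aᵀ) (Matrix.fromBlocks E (-Φ) (-Φᵀ) H)) := by
  refine isUnit_of_mulVec_eq_zero fun v hv => ?_
  simp only [fromBlocks_mulVec, ← Sum.elim_zero_zero, ← Sum.elim_add_add, Sum.elim_eq_iff,
    zero_mulVec, add_zero, zero_add] at hv
  obtain ⟨⟨hDa, hAx⟩, hEc, hstat⟩ := hv
  simp only [neg_mulVec, ← sub_eq_add_neg, sub_eq_zero] at hDa hEc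
  rw [neg_mulVec, neg_mulVec] at hstat
  obtain ⟨ha, hb, hc, hx⟩ := kkt_homogeneous_eq_zero hH hD hE
    (linearIndependent_row_iff_rank_eq_card.2 (by rw [hA, Fintype.card_fin])) hker hDa hAx hEc
    (by linear_combination (norm := module) hstat)
  ext ((i | i) | (i | i))
  exacts [congrFun ha i, congrFun hb i, congrFun hc i, congrFun hx i]
end

section
/- Let m, p, n be natural numbers, H ∈ ℝ^{n×n} a symmetric positive semidefinite matrix, D ∈ ℝ^{m×m} and E ∈ ℝ^{p×p} symmetric negative definite matrices, G ∈ ℝ^{m×n} and Φ ∈ ℝ^{p×n}. Assume that the only vector x ∈ ℝⁿ with Hx = 0, Gx = 0 and Φx = 0 is x = 0. Then the matrix R = H − Gᵀ D⁻¹ G − Φᵀ E⁻¹ Φ is symmetric positive definite. -/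
/-! Flipping signs, `R = H + Gᵀ (-D)⁻¹ G + Φᵀ (-E)⁻¹ Φ` is a sum of positive semidefinite
matrices, and the kernel of such a sum is the intersection of the kernels; here that is
`ker H ∩ ker G ∩ ker Φ = 0`, and a positive semidefinite matrix with trivial kernel is
positive definite. -/

open Matrix

namespace Matrix

theorem inv_neg {n α : Type*} [Fintype n] [DecidableEq n] [CommRing α] (A : Matrix n n α) :
    (-A)⁻¹ = -A⁻¹ := by
  by_cases hA : IsUnit A.det
  · exact inv_eq_left_inv (by rw [neg_mul_neg, nonsing_inv_mul A hA])
  · have hnegA : ¬IsUnit (-A).det := by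
      rwa [det_neg, (isUnit_neg_one.pow _).mul_left_iff]
    rw [nonsing_inv_apply_not_isUnit A hA, nonsing_inv_apply_not_isUnit _ hnegA, neg_zero]

section RCLike

variable {m n 𝕜 : Type*} [Fintype m] [Fintype n] [RCLike 𝕜]

open scoped ComplexOrder

theorem PosSemidef.add_mulVec_eq_zero_iff {A B : Matrix n n 𝕜} (hA : A.PosSemidef)
    (hB : B.PosSemidef) {x : n → 𝕜} :
    (A + B) *ᵥ x = 0 ↔ A *ᵥ x = 0 ∧ B *ᵥ x = 0 := by
  refine ⟨fun h => ?_, fun ⟨hAx, hBx⟩ => by rw [add_mulVec, hAx, hBx, add_zero]⟩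
  have hsum : star x ⬝ᵥ A *ᵥ x + star x ⬝ᵥ B *ᵥ x = 0 := by
    rw [← dotProduct_add, ← add_mulVec, h, dotProduct_zero]
  rw [add_eq_zero_iff_of_nonneg (hA.dotProduct_mulVec_nonneg x)
    (hB.dotProduct_mulVec_nonneg x)] at hsum
  exact ⟨(hA.dotProduct_mulVec_zero_iff x).1 hsum.1, (hB.dotProduct_mulVec_zero_iff x).1 hsum.2⟩

theorem PosDef.conjTranspose_mul_mul_mulVec_eq_zero_iff {A : Matrix m m 𝕜} (hA : A.PosDef)
    {B : Matrix m n 𝕜} {x : n → 𝕜} :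
    (Bᴴ * A * B) *ᵥ x = 0 ↔ B *ᵥ x = 0 := by
  refine ⟨fun h => ?_, fun h => by rw [← mulVec_mulVec, h, mulVec_zero]⟩
  by_contra hBx
  have hquad : star x ⬝ᵥ (Bᴴ * A * B) *ᵥ x = star (B *ᵥ x) ⬝ᵥ A *ᵥ (B *ᵥ x) := by
    rw [← mulVec_mulVec, ← mulVec_mulVec, dotProduct_mulVec, vecMul_conjTranspose, star_star]
  exact (hA.dotProduct_mulVec_pos hBx).ne' (by rw [← hquad, h, dotProduct_zero])

theorem PosSemidef.posDef_of_forall_mulVec_eq_zero [DecidableEq n] {A : Matrix n n 𝕜}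
    (hA : A.PosSemidef) (hker : ∀ x, A *ᵥ x = 0 → x = 0) : A.PosDef :=
  hA.posDef_iff_isUnit.2 <| mulVec_injective_iff_isUnit.1 fun x y hxy =>
    sub_eq_zero.1 <| hker _ <| by rw [mulVec_sub, hxy, sub_self]

end RCLike

end Matrix

/-- The reduced matrix `R = H − Gᵀ D⁻¹ G − Φᵀ E⁻¹ Φ` is symmetric positive
definite (key intermediate claim in the proof of the paper's Lemma 1). -/
theorem reduced_matrix_posDef
    (m p n : ℕ)
    (H : Matrix (Fin n) (Fin n) ℝ) (hH : H.PosSemidef)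
    (D : Matrix (Fin m) (Fin m) ℝ) (hD : (-D).PosDef)
    (E : Matrix (Fin p) (Fin p) ℝ) (hE : (-E).PosDef)
    (G : Matrix (Fin m) (Fin n) ℝ) (Φ : Matrix (Fin p) (Fin n) ℝ)
    (hker : ∀ x : Fin n → ℝ,
      H.mulVec x = 0 → G.mulVec x = 0 → Φ.mulVec x = 0 → x = 0) :
    (H - Gᵀ * D⁻¹ * G - Φᵀ * E⁻¹ * Φ).PosDef := by
  have hR : H - Gᵀ * D⁻¹ * G - Φᵀ * E⁻¹ * Φ = H + Gᴴ * (-D)⁻¹ * G + Φᴴ * (-E)⁻¹ * Φ := by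
    simp only [Matrix.inv_neg, conjTranspose_eq_transpose_of_trivial, Matrix.mul_neg,
      Matrix.neg_mul, sub_eq_add_neg]
  have hGD := hD.inv.posSemidef.conjTranspose_mul_mul_same G
  have hΦE := hE.inv.posSemidef.conjTranspose_mul_mul_same Φ
  rw [hR]
  refine ((hH.add hGD).add hΦE).posDef_of_forall_mulVec_eq_zero fun x hx => ?_
  obtain ⟨hHG, hΦx⟩ := ((hH.add hGD).add_mulVec_eq_zero_iff hΦE).1 hx
  obtain ⟨hHx, hGx⟩ := (hH.add_mulVec_eq_zero_iff hGD).1 hHG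
  exact hker x hHx (hD.inv.conjTranspose_mul_mul_mulVec_eq_zero_iff.1 hGx)
    (hE.inv.conjTranspose_mul_mul_mulVec_eq_zero_iff.1 hΦx)
end

section
/- Let a, b, z ∈ ℝ with (a, b, z) ≠ (0, 0, 0). Then the function t ↦ ψ(t, b, z) is differentiable at a with derivative a/√(a² + b² + z²) − 1, and this derivative lies in the closed interval [−2, 0]. By the symmetry of ψ in its first two arguments, the same holds for the partial derivative with respect to b. -/
open Real

theorem smoothFB_comm (a b z : ℝ) : smoothFB a b z = smoothFB b a z := by
  unfold smoothFB
  ring_nf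

theorem hasDerivAt_sqrt_sq_add (a c : ℝ) (h : a ^ 2 + c ≠ 0) :
    HasDerivAt (fun t => √(t ^ 2 + c)) (a / √(a ^ 2 + c)) a := by
  have hsq : HasDerivAt (fun t => t ^ 2 + c) (2 * a) a := by
    simpa using (hasDerivAt_pow 2 a).add_const c
  convert hsq.sqrt h using 1
  field_simp

theorem abs_le_sqrt_sq_add {c : ℝ} (a : ℝ) (hc : 0 ≤ c) : |a| ≤ √(a ^ 2 + c) := by
  rw [← sqrt_sq_eq_abs]
  exact sqrt_le_sqrt (by linarith)

theorem div_sqrt_sq_add_mem_Icc {c : ℝ} (a : ℝ) (hc : 0 ≤ c) :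
    a / √(a ^ 2 + c) ∈ Set.Icc (-1 : ℝ) 1 := by
  rw [Set.mem_Icc, ← abs_le, abs_div, abs_of_nonneg (sqrt_nonneg _)]
  exact div_le_one_of_le₀ (abs_le_sqrt_sq_add a hc) (sqrt_nonneg _)

theorem hasDerivAt_smoothFB_fst (a b z : ℝ) (h : a ^ 2 + b ^ 2 + z ^ 2 ≠ 0) :
    HasDerivAt (fun t => smoothFB t b z) (a / √(a ^ 2 + b ^ 2 + z ^ 2) - 1) a ∧
      a / √(a ^ 2 + b ^ 2 + z ^ 2) - 1 ∈ Set.Icc (-2 : ℝ) 0 := by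
  have hsum : ∀ t : ℝ, t ^ 2 + b ^ 2 + z ^ 2 = t ^ 2 + (b ^ 2 + z ^ 2) := fun t => add_assoc _ _ _
  simp only [smoothFB, hsum] at h ⊢
  obtain ⟨hlo, hhi⟩ := div_sqrt_sq_add_mem_Icc a (by positivity : 0 ≤ b ^ 2 + z ^ 2)
  refine ⟨((hasDerivAt_sqrt_sq_add a _ h).sub (hasDerivAt_id a)).sub_const b, ?_, ?_⟩ <;>
    linarith

/-- The partial derivatives of the smooth Fischer–Burmeister function with
respect to its first two arguments exist away from the origin and lie in
`[−2, 0]`. -/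
theorem smoothFB_deriv_mem_Icc (a b z : ℝ) (h : ¬(a = 0 ∧ b = 0 ∧ z = 0)) :
    (HasDerivAt (fun t => smoothFB t b z)
        (a / Real.sqrt (a ^ 2 + b ^ 2 + z ^ 2) - 1) a ∧
      a / Real.sqrt (a ^ 2 + b ^ 2 + z ^ 2) - 1 ∈ Set.Icc (-2 : ℝ) 0) ∧
    (HasDerivAt (fun t => smoothFB a t z)
        (b / Real.sqrt (a ^ 2 + b ^ 2 + z ^ 2) - 1) b ∧
      b / Real.sqrt (a ^ 2 + b ^ 2 + z ^ 2) - 1 ∈ Set.Icc (-2 : ℝ) 0) := by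
  have hs : a ^ 2 + b ^ 2 + z ^ 2 ≠ 0 := by
    contrapose! h
    refine ⟨?_, ?_, ?_⟩ <;> nlinarith [sq_nonneg a, sq_nonneg b, sq_nonneg z]
  have hswap : b ^ 2 + a ^ 2 + z ^ 2 = a ^ 2 + b ^ 2 + z ^ 2 := by ring
  have hb := hasDerivAt_smoothFB_fst b a z (hswap ▸ hs)
  simp only [hswap, ← smoothFB_comm a] at hb
  exact ⟨hasDerivAt_smoothFB_fst a b z hs, hb⟩
end
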